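/- arXiv:cs/0502080 — 2 statements merged into one kernel-verified Lean document; each statement's English description precedes it below -/
import Mathlib

section
/- For every fixed Γ > 1, the map a ↦ K(a,Γ) is strictly decreasing on [0,1); i.e., for SNR above one the error exponent decreases monotonically as the correlation between samples increases. -/
/-- The steady-state prediction error variance `P(a, Γ)`: the unique positive root of
`P² + (1 − a²)(1 − Γ)P − Γ(1 − a²) = 0`, given in closed form. -/
noncomputable def Pss (a Γ : ℝ) : ℝ :=
  ((1 - a ^ 2) * (Γ - 1) +
    Real.sqrt ((1 - a ^ 2) ^ 2 * (1 - Γ) ^ 2 + 4 * Γ * (1 - a ^ 2))) / 2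

/-- The steady-state Kalman gain factor `K_p = a·P/(1+P)`. -/
noncomputable def Kgain (a Γ : ℝ) : ℝ := a * Pss a Γ / (1 + Pss a Γ)

/-- `P̃ = K_p²/(1 − (a − K_p)²)`, the solution of the Lyapunov equation. -/
noncomputable def Ptilde (a Γ : ℝ) : ℝ :=
  (Kgain a Γ) ^ 2 / (1 - (a - Kgain a Γ) ^ 2)

/-- The closed-form error exponent `K(a, Γ) = ½·log(1+P) + ½·(1+P̃)/(1+P) − ½`. -/
noncomputable def Kexp (a Γ : ℝ) : ℝ :=
  (1 / 2) * Real.log (1 + Pss a Γ) + (1 / 2) * (1 + Ptilde a Γ) / (1 + Pss a Γ) - 1 / 2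

/-!
Eliminating `a` through the Riccati equation `P² = (1 - a²)(Γ + (Γ - 1)P)` gives
`(1 + P̃)/(1 + P) = (2Γ - P)/(2Γ + (Γ - 1)P)`, so `2K = log (1 + P) - ΓP/(2Γ + (Γ - 1)P)` depends
on `a` only through `P`. For `Γ > 1`, `P(a, Γ)` decreases strictly in `a` and stays in `[0, Γ]`,
where this function of `P` increases strictly: between `p < q` the rational term grows by
`2Γ²(q - p)/(D_p D_q)`, with `D_x = 2Γ + (Γ - 1)x`, and `D_p D_q ≥ 2Γ · Γ(1 + q)` bounds this by
`(q - p)/(1 + q) < log (1 + q) - log (1 + p)`.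
-/

open Real Set

lemma Pss_nonneg {a Γ : ℝ} (hΓ : 0 ≤ Γ) (ha : a ^ 2 ≤ 1) : 0 ≤ Pss a Γ := by
  have h := Real.abs_le_sqrt (x := (1 - a ^ 2) * (Γ - 1))
    (y := (1 - a ^ 2) ^ 2 * (1 - Γ) ^ 2 + 4 * Γ * (1 - a ^ 2)) (by nlinarith)
  unfold Pss
  linarith [neg_abs_le ((1 - a ^ 2) * (Γ - 1))]

lemma Pss_le {a Γ : ℝ} (hΓ : 0 ≤ Γ) (ha : a ^ 2 ≤ 1) : Pss a Γ ≤ Γ := by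
  have h : √((1 - a ^ 2) ^ 2 * (1 - Γ) ^ 2 + 4 * Γ * (1 - a ^ 2))
      ≤ Γ * (1 + a ^ 2) + (1 - a ^ 2) :=
    Real.sqrt_le_iff.2 ⟨by nlinarith, by nlinarith [mul_nonneg (sq_nonneg Γ) (sq_nonneg a)]⟩
  unfold Pss
  linarith

lemma Pss_sq {a Γ : ℝ} (hΓ : 0 ≤ Γ) (ha : a ^ 2 ≤ 1) :
    Pss a Γ ^ 2 = (1 - a ^ 2) * (Γ + (Γ - 1) * Pss a Γ) := by
  have h := Real.sq_sqrt (x := (1 - a ^ 2) ^ 2 * (1 - Γ) ^ 2 + 4 * Γ * (1 - a ^ 2))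
    (by nlinarith [sq_nonneg ((1 - a ^ 2) * (1 - Γ))])
  unfold Pss
  linear_combination h / 4

lemma Pss_strictAntiOn {Γ : ℝ} (hΓ : 1 < Γ) : StrictAntiOn (Pss · Γ) (Icc 0 1) := by
  intro a ⟨ha0, ha1⟩ b ⟨hb0, hb1⟩ hab
  have hsq : a ^ 2 < b ^ 2 := by nlinarith
  have hroot : √((1 - b ^ 2) ^ 2 * (1 - Γ) ^ 2 + 4 * Γ * (1 - b ^ 2))
      ≤ √((1 - a ^ 2) ^ 2 * (1 - Γ) ^ 2 + 4 * Γ * (1 - a ^ 2)) :=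
    Real.sqrt_le_sqrt <| by
      have : 0 ≤ (b ^ 2 - a ^ 2) * (2 - a ^ 2 - b ^ 2) := mul_nonneg (by linarith) (by nlinarith)
      nlinarith [mul_nonneg (sq_nonneg (1 - Γ)) this]
  simp only [Pss]
  nlinarith

lemma Ptilde_eq {a Γ : ℝ} (hΓ : 0 ≤ Γ) (ha : a ^ 2 < 1) :
    Ptilde a Γ = a ^ 2 * Pss a Γ ^ 2 / ((1 + Pss a Γ) ^ 2 - a ^ 2) := by
  have hP := Pss_nonneg hΓ ha.le
  have h1P : 1 + Pss a Γ ≠ 0 := by positivity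
  have hden : 1 - (a - a * Pss a Γ / (1 + Pss a Γ)) ^ 2
      = ((1 + Pss a Γ) ^ 2 - a ^ 2) / (1 + Pss a Γ) ^ 2 := by
    field_simp
    ring
  rw [Ptilde, Kgain, hden, div_pow, div_div_div_cancel_right₀ (pow_ne_zero 2 h1P), mul_pow]

-- multiplied by `1 - a²`, this is `Γ (1 - a²) + P²` by the Riccati equation
lemma two_mul_add_mul_Pss_pos {a Γ : ℝ} (hΓ : 0 < Γ) (ha : a ^ 2 < 1) :
    0 < 2 * Γ + (Γ - 1) * Pss a Γ := by
  have hric := Pss_sq hΓ.le ha.le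
  nlinarith [sq_nonneg (Pss a Γ)]

lemma one_add_Ptilde_div_one_add_Pss {a Γ : ℝ} (hΓ : 0 < Γ) (ha : a ^ 2 < 1) :
    (1 + Ptilde a Γ) / (1 + Pss a Γ)
      = (2 * Γ - Pss a Γ) / (2 * Γ + (Γ - 1) * Pss a Γ) := by
  have hP := Pss_nonneg hΓ.le ha.le
  have hric := Pss_sq hΓ.le ha.le
  have h1P : 0 < 1 + Pss a Γ := by positivity
  have hden : 0 < (1 + Pss a Γ) ^ 2 - a ^ 2 := by nlinarith
  rw [Ptilde_eq hΓ.le ha, div_eq_div_iff (by positivity) (two_mul_add_mul_Pss_pos hΓ ha).ne']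
  field_simp
  linear_combination (Pss a Γ * (1 + Pss a Γ)) * hric

noncomputable def exponentOfPss (Γ p : ℝ) : ℝ :=
  log (1 + p) - Γ * p / (2 * Γ + (Γ - 1) * p)

lemma Kexp_eq {a Γ : ℝ} (hΓ : 0 < Γ) (ha : a ^ 2 < 1) :
    Kexp a Γ = exponentOfPss Γ (Pss a Γ) / 2 := by
  have hsplit : (2 * Γ - Pss a Γ) / (2 * Γ + (Γ - 1) * Pss a Γ)
      = 1 - Γ * Pss a Γ / (2 * Γ + (Γ - 1) * Pss a Γ) := by
    rw [eq_sub_iff_add_eq, ← add_div, div_eq_one_iff_eq (two_mul_add_mul_Pss_pos hΓ ha).ne']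
    ring
  rw [Kexp, mul_div_assoc, one_add_Ptilde_div_one_add_Pss hΓ ha, hsplit, exponentOfPss]
  ring

lemma exponentOfPss_strictMonoOn {Γ : ℝ} (hΓ : 1 ≤ Γ) :
    StrictMonoOn (exponentOfPss Γ) (Icc 0 Γ) := by
  intro p ⟨hp0, hpΓ⟩ q ⟨hq0, hqΓ⟩ hpq
  have hDp : 2 * Γ ≤ 2 * Γ + (Γ - 1) * p := by nlinarith
  have hDq : Γ * (1 + q) ≤ 2 * Γ + (Γ - 1) * q := by nlinarith
  have hlog : (q - p) / (1 + q) < log (1 + q) - log (1 + p) := by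
    have h := log_lt_sub_one_of_pos (x := (1 + p) / (1 + q)) (by positivity)
      (by rw [Ne, div_eq_one_iff_eq (by positivity)]; linarith)
    rw [log_div (by positivity) (by positivity)] at h
    have : (1 + p) / (1 + q) - 1 = -((q - p) / (1 + q)) := by field_simp; ring
    linarith
  have hrat : Γ * q / (2 * Γ + (Γ - 1) * q) - Γ * p / (2 * Γ + (Γ - 1) * p)
      ≤ (q - p) / (1 + q) := by
    rw [div_sub_div _ _ (by positivity) (by positivity),
      div_le_div_iff₀ (by positivity) (by positivity)]
    nlinarith [mul_le_mul hDp hDq (by positivity) (by positivity)]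
  unfold exponentOfPss
  linarith

/-- For every fixed `Γ > 1`, the map `a ↦ K(a,Γ)` is strictly decreasing on `[0,1)`:
for SNR above one the error exponent decreases monotonically with correlation. -/
theorem errorExponent_strictAntiOn_of_snr_gt_one (Γ : ℝ) (hΓ : 1 < Γ) :
    StrictAntiOn (fun a => Kexp a Γ) (Set.Ico (0 : ℝ) 1) := by
  have hΓ0 : 0 < Γ := by linarith
  have hsq {a : ℝ} (ha : a ∈ Ico (0 : ℝ) 1) : a ^ 2 < 1 := by nlinarith [ha.1, ha.2]
  have hmaps : MapsTo (Pss · Γ) (Ico 0 1) (Icc 0 Γ) := fun a ha =>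
    ⟨Pss_nonneg hΓ0.le (hsq ha).le, Pss_le hΓ0.le (hsq ha).le⟩
  have hanti := (exponentOfPss_strictMonoOn hΓ.le).comp_strictAntiOn
    ((Pss_strictAntiOn hΓ).mono Ico_subset_Icc_self) hmaps
  intro a ha b hb hab
  have hlt : exponentOfPss Γ (Pss b Γ) < exponentOfPss Γ (Pss a Γ) := hanti ha hb hab
  simp only [Kexp_eq hΓ0 (hsq ha), Kexp_eq hΓ0 (hsq hb)]
  linarith
end

section
/- For every fixed a ∈ [0,1), the map Γ ↦ K(a,Γ) is strictly increasing on (0,∞); i.e., the error exponent is monotone increasing in SNR for a given correlation coefficient. -/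
lemma Pss_quad (a Γ : ℝ) (ha : a ^ 2 < 1) (hΓ : 0 < Γ) :
    (Pss a Γ) ^ 2 + (1 - a ^ 2) * (1 - Γ) * (Pss a Γ) - Γ * (1 - a ^ 2) = 0 := by
  have hb : 0 < 1 - a ^ 2 := by linarith
  have hD : 0 ≤ (1 - a ^ 2) ^ 2 * (1 - Γ) ^ 2 + 4 * Γ * (1 - a ^ 2) := by positivity
  have hs : (Real.sqrt ((1 - a ^ 2) ^ 2 * (1 - Γ) ^ 2 + 4 * Γ * (1 - a ^ 2))) ^ 2
      = (1 - a ^ 2) ^ 2 * (1 - Γ) ^ 2 + 4 * Γ * (1 - a ^ 2) := Real.sq_sqrt hD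
  unfold Pss
  nlinarith [hs]

lemma Pss_pos (a Γ : ℝ) (ha : a ^ 2 < 1) (hΓ : 0 < Γ) : 0 < Pss a Γ := by
  have hb : 0 < 1 - a ^ 2 := by linarith
  have hD : 0 ≤ (1 - a ^ 2) ^ 2 * (1 - Γ) ^ 2 + 4 * Γ * (1 - a ^ 2) := by positivity
  have hs : (Real.sqrt ((1 - a ^ 2) ^ 2 * (1 - Γ) ^ 2 + 4 * Γ * (1 - a ^ 2))) ^ 2
      = (1 - a ^ 2) ^ 2 * (1 - Γ) ^ 2 + 4 * Γ * (1 - a ^ 2) := Real.sq_sqrt hD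
  have hs0 : 0 ≤ Real.sqrt ((1 - a ^ 2) ^ 2 * (1 - Γ) ^ 2 + 4 * Γ * (1 - a ^ 2)) :=
    Real.sqrt_nonneg _
  unfold Pss
  nlinarith [mul_pos hΓ hb]

lemma Pss_strictMono (a : ℝ) (ha : a ^ 2 < 1) {Γ₁ Γ₂ : ℝ} (h1 : 0 < Γ₁) (h12 : Γ₁ < Γ₂) :
    Pss a Γ₁ < Pss a Γ₂ := by
  have h2 : 0 < Γ₂ := lt_trans h1 h12
  have hb : 0 < 1 - a ^ 2 := by linarith
  have hq1 := Pss_quad a Γ₁ ha h1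
  have hq2 := Pss_quad a Γ₂ ha h2
  have hp1 := Pss_pos a Γ₁ ha h1
  have hp2 := Pss_pos a Γ₂ ha h2
  by_contra h
  push_neg at h
  nlinarith [mul_pos hp1 hp2, mul_pos (mul_pos hp1 hp2) hb,
    mul_pos (sub_pos.2 h12) hb, mul_pos hb hp1, mul_pos hb hp2]

/-- The exponent as a function of `P` alone. -/
noncomputable def Fa (a P : ℝ) : ℝ :=
  (1/2) * Real.log (1+P) + (1/2) * (((1+a^2)*(1+P) - 2*a^2)/((1+P)^2 - a^2)) - 1/2

lemma Fa_hasDeriv (a P : ℝ) (ha : a ^ 2 < 1) (hP : 0 < P) :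
    HasDerivAt (Fa a)
      ((1/2) * (1/(1+P)) + (1/2) *
        (((1+a^2)*((1+P)^2 - a^2) - ((1+a^2)*(1+P) - 2*a^2)*(2*(1+P)))/((1+P)^2 - a^2)^2)) P := by
  have hu : (0:ℝ) < 1 + P := by linarith
  have hd : (0:ℝ) < (1+P)^2 - a^2 := by nlinarith
  have h1 : HasDerivAt (fun P : ℝ => 1 + P) 1 P := (hasDerivAt_id P).const_add 1
  have hlog : HasDerivAt (fun P : ℝ => Real.log (1+P)) (1/(1+P)) P := by
    simpa using h1.log hu.ne'
  have hnum : HasDerivAt (fun P : ℝ => (1+a^2)*(1+P) - 2*a^2) (1+a^2) P := by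
    simpa using ((h1.const_mul (1+a^2)).sub_const (2*a^2))
  have hden : HasDerivAt (fun P : ℝ => (1+P)^2 - a^2) (2*(1+P)) P := by
    have := (h1.pow 2).sub_const (a^2)
    simpa [mul_comm] using this
  have hq : HasDerivAt (fun P : ℝ => ((1+a^2)*(1+P) - 2*a^2)/((1+P)^2 - a^2))
      (((1+a^2)*((1+P)^2 - a^2) - ((1+a^2)*(1+P) - 2*a^2)*(2*(1+P)))/((1+P)^2 - a^2)^2) P :=
    hnum.div hden hd.ne'
  unfold Fa
  simpa using ((hlog.const_mul (1/2:ℝ)).add (hq.const_mul (1/2:ℝ))).sub_const (1/2:ℝ)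

lemma Fa_deriv_pos (a P : ℝ) (ha : a ^ 2 < 1) (hP : 0 < P) :
    0 < (1/2) * (1/(1+P)) + (1/2) *
        (((1+a^2)*((1+P)^2 - a^2) - ((1+a^2)*(1+P) - 2*a^2)*(2*(1+P)))/((1+P)^2 - a^2)^2) := by
  set u := 1 + P with hu'
  have hu : (0:ℝ) < u := by simp [hu']; linarith
  have hd : (0:ℝ) < u^2 - a^2 := by nlinarith
  have key : (1/2) * (1/u) + (1/2) *
      (((1+a^2)*(u^2 - a^2) - ((1+a^2)*u - 2*a^2)*(2*u))/(u^2 - a^2)^2)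
      = ((u-1)*(u-a^2)*(u^2+a^2)) / (2 * u * (u^2-a^2)^2) := by
    field_simp
    ring
  rw [key]
  have h1 : 0 < u - 1 := by simp [hu']; linarith
  have h2 : 0 < u - a^2 := by nlinarith
  have h3 : 0 < u^2 + a^2 := by positivity
  positivity

lemma Fa_strictMonoOn (a : ℝ) (ha : a ^ 2 < 1) : StrictMonoOn (Fa a) (Set.Ici (0:ℝ)) := by
  apply strictMonoOn_of_deriv_pos (convex_Ici 0)
  · apply ContinuousOn.sub
    apply ContinuousOn.add
    · apply ContinuousOn.mul continuousOn_const
      apply ContinuousOn.log (by fun_prop)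
      intro x hx
      simp at hx; intro h; linarith
    · apply ContinuousOn.mul continuousOn_const
      apply ContinuousOn.div (by fun_prop) (by fun_prop)
      intro x hx
      simp at hx; nlinarith
    · exact continuousOn_const
  · intro P hP
    rw [interior_Ici] at hP
    rw [(Fa_hasDeriv a P ha hP).deriv]
    exact Fa_deriv_pos a P ha hP

lemma Kexp_eq_Fa (a Γ : ℝ) (ha : a ^ 2 < 1) (hΓ : 0 < Γ) : Kexp a Γ = Fa a (Pss a Γ) := by
  set P := Pss a Γ with hP'
  have hP : 0 < P := Pss_pos a Γ ha hΓ
  have hu : (0:ℝ) < 1 + P := by linarith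
  have hd : (0:ℝ) < (1+P)^2 - a^2 := by nlinarith
  have hK : Kgain a Γ = a * P / (1 + P) := rfl
  have haK : a - Kgain a Γ = a / (1 + P) := by
    rw [hK]; field_simp; ring
  have hden : 1 - (a - Kgain a Γ) ^ 2 = ((1+P)^2 - a^2) / (1+P)^2 := by
    rw [haK]; field_simp
  have hPt : Ptilde a Γ = a^2 * P^2 / ((1+P)^2 - a^2) := by
    unfold Ptilde
    rw [hK]
    have haK2 : a - a*P/(1+P) = a/(1+P) := by field_simp; ring
    rw [haK2]
    have hne : (1 - (a/(1+P))^2) ≠ 0 := by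
      have : 1 - (a/(1+P))^2 = ((1+P)^2 - a^2)/(1+P)^2 := by field_simp
      rw [this]; positivity
    field_simp
  unfold Kexp Fa
  rw [← hP', hPt]
  have : (1 + a^2 * P^2 / ((1+P)^2 - a^2)) / (1 + P)
      = ((1+a^2)*(1+P) - 2*a^2)/((1+P)^2 - a^2) := by
    field_simp
    ring
  rw [div_eq_mul_inv ((1:ℝ)/2 * _), mul_assoc, ← div_eq_mul_inv (1 + _)]
  rw [this]

/-- For every fixed `a ∈ [0,1)`, the map `Γ ↦ K(a,Γ)` is strictly increasing on `(0,∞)`: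
the error exponent is monotone increasing in SNR for a given correlation coefficient. -/
theorem errorExponent_strictMonoOn_snr (a : ℝ) (ha0 : 0 ≤ a) (ha1 : a < 1) :
    StrictMonoOn (fun Γ => Kexp a Γ) (Set.Ioi (0 : ℝ)) := by
  have ha : a ^ 2 < 1 := by nlinarith
  intro Γ₁ h1 Γ₂ h2 h12
  simp only [Set.mem_Ioi] at h1 h2
  have e1 := Kexp_eq_Fa a Γ₁ ha h1
  have e2 := Kexp_eq_Fa a Γ₂ ha h2
  simp only [e1, e2]
  exact Fa_strictMonoOn a ha (le_of_lt (Pss_pos a Γ₁ ha h1))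
    (le_of_lt (Pss_pos a Γ₂ ha h2)) (Pss_strictMono a ha h1 h12)
end
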